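/- A finite word w is rich if and only if the following holds: for every non-palindromic factor u of w, the longest palindromic prefix p of u and the longest palindromic suffix q of u satisfy p ≠ q and neither p nor q is a factor of the other, and any two non-palindromic factors of w having the same longest palindromic prefix and the same longest palindromic suffix are equal. -/

import Mathlib

/-!
Appending a letter to a word creates at most one new palindromic factor, namely its longest
palindromic suffix, so `w` is rich exactly when the longest palindromic suffix of every prefix
of `w` is unioccurrent in it. Richness passes to reversals and factors, hence in a rich
non-palindromic factor `u` the longest palindromic prefix `p` and suffix `q` are both
unioccurrent, which forbids `p` and `q` to occur in one another. Conversely, if the longest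
palindromic suffix `m` of a prefix `t a` already occurs in `t`, the suffix of `t a` starting at
that occurrence is non-palindromic with longest palindromic suffix `m`, and `m` is also a
palindromic prefix of it.

For the uniqueness, induct on `|w|`: two distinct non-palindromic factors with the same pair
`(p, q)` are, by induction, a suffix `u` and a prefix `v` of `w`. Unioccurrence of the longest
palindromic suffix and prefix of `w` forces `u` inside the former and `v` inside the latter, so
the reversals of `u` and `v` are again factors of `w`, with the pair `(q, p)`; by induction
`u.reverse` is a prefix of `w`. Then `p` and `q` are both prefixes of `w`, so one is a factor
of the other.
-/

def palFactors {A : Type*} [DecidableEq A] (w : List A) : Finset (List A) :=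
  ((w.inits.flatMap List.tails).filter (fun u => u.reverse = u)).toFinset

def Rich {A : Type*} [DecidableEq A] (w : List A) : Prop :=
  (palFactors w).card = w.length + 1

def LongestPalPrefix {A : Type*} (p u : List A) : Prop :=
  p <+: u ∧ p.reverse = p ∧ ∀ p' : List A, p' <+: u → p'.reverse = p' → p'.length ≤ p.length

def LongestPalSuffix {A : Type*} (q u : List A) : Prop :=
  q <:+ u ∧ q.reverse = q ∧ ∀ q' : List A, q' <:+ u → q'.reverse = q' → q'.length ≤ q.length

section

open List Set

variable {A : Type*}

namespace List

variable {l₁ l₂ : List A}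

theorem IsPrefix.prefix_dropLast_of_ne (h : l₁ <+: l₂) (hne : l₁ ≠ l₂) :
    l₁ <+: l₂.dropLast := by
  obtain ⟨r, rfl⟩ := h
  have hr : r ≠ [] := by rintro rfl; simp at hne
  rw [dropLast_append_of_ne_nil hr]
  exact prefix_append _ _

theorem IsSuffix.suffix_tail_of_ne (h : l₁ <:+ l₂) (hne : l₁ ≠ l₂) : l₁ <:+ l₂.tail := by
  simpa using (reverse_prefix.mpr h).prefix_dropLast_of_ne (by simpa using hne)

theorem IsSuffix.dropLast (h : l₁ <:+ l₂) : l₁.dropLast <:+ l₂.dropLast := by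
  obtain ⟨z, rfl⟩ := h
  rcases eq_or_ne l₁ [] with rfl | hne
  · exact nil_suffix
  · rw [dropLast_append_of_ne_nil hne]
    exact suffix_append _ _

theorem IsPrefix.tail (h : l₁ <+: l₂) : l₁.tail <+: l₂.tail := by
  simpa using (reverse_suffix.mpr h).dropLast

theorem infix_iff_prefix_or_infix_tail : l₁ <:+: l₂ ↔ l₁ <+: l₂ ∨ l₁ <:+: l₂.tail := by
  cases l₂ with
  | nil => simp [infix_nil, prefix_nil]
  | cons a l => exact infix_cons_iff

theorem infix_iff_suffix_or_infix_dropLast : l₁ <:+: l₂ ↔ l₁ <:+ l₂ ∨ l₁ <:+: l₂.dropLast := by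
  rw [← reverse_infix, infix_iff_prefix_or_infix_tail, tail_reverse, reverse_prefix,
    reverse_infix]

theorem IsInfix.infix_dropLast_or_infix_tail (h : l₁ <:+: l₂) (hne : l₁ ≠ l₂) :
    l₁ <:+: l₂.dropLast ∨ l₁ <:+: l₂.tail :=
  (infix_iff_prefix_or_infix_tail.mp h).imp_left fun hp => (hp.prefix_dropLast_of_ne hne).isInfix

end List

section MaxPal

theorem exists_longestPalSuffix (u : List A) : ∃ q, LongestPalSuffix q u := by
  classical
  obtain ⟨q, hq, hmax⟩ := Finset.exists_max_image
    (u.tails.toFinset.filter fun q => q.reverse = q) length ⟨[], by simp⟩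
  simp only [Finset.mem_filter, List.mem_toFinset, mem_tails] at hq hmax
  exact ⟨q, hq.1, hq.2, fun q' h1 h2 => hmax q' ⟨h1, h2⟩⟩

noncomputable def maxPalSuffix (u : List A) : List A := (exists_longestPalSuffix u).choose

noncomputable def maxPalPrefix (u : List A) : List A := maxPalSuffix u.reverse

variable {u w q p : List A}

theorem longestPalSuffix_maxPalSuffix (u : List A) : LongestPalSuffix (maxPalSuffix u) u :=
  (exists_longestPalSuffix u).choose_spec

theorem maxPalSuffix_suffix (u : List A) : maxPalSuffix u <:+ u :=
  (longestPalSuffix_maxPalSuffix u).1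

theorem reverse_maxPalSuffix (u : List A) : (maxPalSuffix u).reverse = maxPalSuffix u :=
  (longestPalSuffix_maxPalSuffix u).2.1

theorem suffix_maxPalSuffix (h : q <:+ u) (hq : q.reverse = q) :
    q <:+ maxPalSuffix u :=
  suffix_of_suffix_length_le h (maxPalSuffix_suffix u)
    ((longestPalSuffix_maxPalSuffix u).2.2 q h hq)

theorem LongestPalSuffix.eq_maxPalSuffix (h : LongestPalSuffix q u) : q = maxPalSuffix u :=
  (suffix_maxPalSuffix h.1 h.2.1).eq_of_length_le
    (h.2.2 _ (maxPalSuffix_suffix u) (reverse_maxPalSuffix u))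

theorem maxPalSuffix_eq_of_suffix (hu : u <:+ w) (h : maxPalSuffix w <:+ u) :
    maxPalSuffix u = maxPalSuffix w :=
  (LongestPalSuffix.eq_maxPalSuffix ⟨h, reverse_maxPalSuffix w,
    fun q' hq' hpal => (longestPalSuffix_maxPalSuffix w).2.2 q' (hq'.trans hu) hpal⟩).symm

@[simp]
theorem maxPalSuffix_reverse (u : List A) : maxPalSuffix u.reverse = maxPalPrefix u := rfl

@[simp]
theorem maxPalPrefix_reverse (u : List A) : maxPalPrefix u.reverse = maxPalSuffix u := by
  rw [maxPalPrefix, reverse_reverse]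

theorem reverse_maxPalPrefix (u : List A) : (maxPalPrefix u).reverse = maxPalPrefix u :=
  reverse_maxPalSuffix _

theorem maxPalPrefix_prefix (u : List A) : maxPalPrefix u <+: u := by
  simpa [reverse_maxPalPrefix] using (maxPalSuffix_suffix u.reverse).reverse

theorem prefix_maxPalPrefix (h : p <+: u) (hp : p.reverse = p) : p <+: maxPalPrefix u := by
  have : p <:+ maxPalPrefix u := suffix_maxPalSuffix (hp ▸ h.reverse) hp
  simpa [hp, reverse_maxPalPrefix] using this.reverse

theorem longestPalPrefix_maxPalPrefix (u : List A) : LongestPalPrefix (maxPalPrefix u) u :=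
  ⟨maxPalPrefix_prefix u, reverse_maxPalPrefix u,
    fun _ hp' hpal => (prefix_maxPalPrefix hp' hpal).length_le⟩

theorem LongestPalPrefix.eq_maxPalPrefix (h : LongestPalPrefix p u) : p = maxPalPrefix u :=
  (prefix_maxPalPrefix h.1 h.2.1).eq_of_length_le
    (h.2.2 _ (maxPalPrefix_prefix u) (reverse_maxPalPrefix u))

def nonpalFactors (w : List A) : Set (List A) := {u | u <:+: w ∧ u.reverse ≠ u}

noncomputable def maxPalAffixes (u : List A) : List A × List A := (maxPalPrefix u, maxPalSuffix u)

theorem maxPalAffixes_reverse (u : List A) : maxPalAffixes u.reverse = (maxPalAffixes u).swap := by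
  simp [maxPalAffixes]

end MaxPal

section Richness

variable [DecidableEq A] {x u v w : List A}

theorem mem_palFactors : x ∈ palFactors w ↔ x <:+: w ∧ x.reverse = x := by
  simp only [palFactors, List.mem_toFinset, mem_filter, mem_flatMap, mem_inits, mem_tails,
    infix_iff_suffix_prefix, decide_eq_true_eq]
  tauto

theorem palFactors_nil : palFactors ([] : List A) = {[]} := by
  ext x
  simp +contextual [mem_palFactors, infix_nil]

theorem palFactors_reverse (w : List A) : palFactors w.reverse = palFactors w := by
  ext x
  rw [mem_palFactors, mem_palFactors, and_congr_left_iff]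
  intro hx
  rw [← reverse_infix, hx, reverse_reverse]

theorem palFactors_append_singleton (v : List A) (a : A) :
    palFactors (v ++ [a]) = insert (maxPalSuffix (v ++ [a])) (palFactors v) := by
  set m := maxPalSuffix (v ++ [a])
  ext x
  simp only [Finset.mem_insert, mem_palFactors, infix_concat_iff]
  constructor
  · rintro ⟨hsuf | hinf, hx⟩
    · rcases eq_or_ne x m with rfl | hxm
      · exact .inl rfl
      -- a palindromic suffix of the palindrome `m` is also a prefix of it
      have hxm' : x <+: m := by
        simpa [hx, reverse_maxPalSuffix] using (suffix_maxPalSuffix hsuf hx).reverse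
      refine .inr ⟨?_, hx⟩
      simpa using (hxm'.prefix_dropLast_of_ne hxm).isInfix.trans
        (maxPalSuffix_suffix (v ++ [a])).dropLast.isInfix
    · exact .inr ⟨hinf, hx⟩
  · rintro (rfl | ⟨hinf, hx⟩)
    · exact ⟨.inl (maxPalSuffix_suffix _), reverse_maxPalSuffix _⟩
    · exact ⟨.inr hinf, hx⟩

theorem card_palFactors_le (w : List A) : (palFactors w).card ≤ w.length + 1 := by
  induction w using reverseRecOn with
  | nil => simp [palFactors_nil]
  | append_singleton v a ih =>
    rw [palFactors_append_singleton, length_append, length_singleton]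
    exact (Finset.card_insert_le _ _).trans (by omega)

theorem rich_append_singleton_iff (v : List A) (a : A) :
    Rich (v ++ [a]) ↔ Rich v ∧ ¬ maxPalSuffix (v ++ [a]) <:+: v := by
  have hmem : maxPalSuffix (v ++ [a]) ∈ palFactors v ↔ maxPalSuffix (v ++ [a]) <:+: v := by
    simp [mem_palFactors, reverse_maxPalSuffix]
  rw [Rich, Rich, palFactors_append_singleton, length_append, length_singleton, ← hmem]
  by_cases h : maxPalSuffix (v ++ [a]) ∈ palFactors v
  · have := card_palFactors_le v
    simp only [Finset.insert_eq_of_mem h, h, not_true_eq_false, and_false, iff_false]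
    omega
  · simp [h, Finset.card_insert_of_notMem h]

theorem rich_iff_forall_not_maxPalSuffix_infix :
    Rich w ↔ ∀ v a, v ++ [a] <+: w → ¬ maxPalSuffix (v ++ [a]) <:+: v := by
  induction w using reverseRecOn with
  | nil => simp [Rich, palFactors_nil]
  | append_singleton w b ih =>
    simp only [rich_append_singleton_iff, ih, prefix_concat_iff]
    constructor
    · rintro ⟨hw, hb⟩ v a (h | h)
      · obtain ⟨rfl, rfl⟩ : v = w ∧ a = b := by simpa using h
        exact hb
      · exact hw v a h
    · intro h
      exact ⟨fun v a hv => h v a (.inr hv), h w b (.inl rfl)⟩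

theorem Rich.prefix (hw : Rich w) (hv : v <+: w) : Rich v :=
  rich_iff_forall_not_maxPalSuffix_infix.mpr fun u a hu =>
    rich_iff_forall_not_maxPalSuffix_infix.mp hw u a (hu.trans hv)

theorem Rich.reverse (hw : Rich w) : Rich w.reverse := by
  rwa [Rich, palFactors_reverse, length_reverse]

theorem Rich.suffix (hw : Rich w) (hv : v <:+ w) : Rich v := by
  simpa using (hw.reverse.prefix (reverse_prefix.mpr hv)).reverse

theorem Rich.infix (hw : Rich w) (hv : v <:+: w) : Rich v :=
  let ⟨_, hvt, htw⟩ := infix_iff_suffix_prefix.mp hv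
  (hw.prefix htw).suffix hvt

theorem Rich.not_maxPalSuffix_infix_dropLast (hw : Rich w) (hne : w ≠ []) :
    ¬ maxPalSuffix w <:+: w.dropLast := by
  obtain ⟨v, a, rfl⟩ := (eq_nil_or_concat w).resolve_left hne
  simpa using rich_iff_forall_not_maxPalSuffix_infix.mp hw v a (by simp)

theorem Rich.not_maxPalPrefix_infix_tail (hw : Rich w) (hne : w ≠ []) :
    ¬ maxPalPrefix w <:+: w.tail := by
  intro h
  apply hw.reverse.not_maxPalSuffix_infix_dropLast (by simpa)
  rwa [maxPalSuffix_reverse, dropLast_reverse, ← reverse_maxPalPrefix, reverse_infix]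

theorem Rich.not_maxPalPrefix_infix_maxPalSuffix (hw : Rich w) (hnw : w.reverse ≠ w) :
    ¬ maxPalPrefix w <:+: maxPalSuffix w := by
  have hne : maxPalSuffix w ≠ w := fun h => hnw (h ▸ reverse_maxPalSuffix w)
  exact fun h => hw.not_maxPalPrefix_infix_tail (by rintro rfl; simp at hnw)
    (h.trans ((maxPalSuffix_suffix w).suffix_tail_of_ne hne).isInfix)

theorem Rich.not_maxPalSuffix_infix_maxPalPrefix (hw : Rich w) (hnw : w.reverse ≠ w) :
    ¬ maxPalSuffix w <:+: maxPalPrefix w := by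
  simpa using hw.reverse.not_maxPalPrefix_infix_maxPalSuffix (by simpa using hnw.symm)

theorem Rich.maxPalAffixes_ne_of_infix_of_ne (hw : Rich w) (hv : v <:+: w) (hvw : v ≠ w) :
    maxPalAffixes v ≠ maxPalAffixes w := by
  have hne : w ≠ [] := by rintro rfl; exact hvw (eq_nil_of_infix_nil hv)
  intro h
  simp only [maxPalAffixes, Prod.mk.injEq] at h
  rcases hv.infix_dropLast_or_infix_tail hvw with hd | ht
  · exact hw.not_maxPalSuffix_infix_dropLast hne (h.2 ▸ (maxPalSuffix_suffix v).isInfix.trans hd)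
  · exact hw.not_maxPalPrefix_infix_tail hne (h.1 ▸ (maxPalPrefix_prefix v).isInfix.trans ht)

theorem Rich.length_lt_maxPalSuffix (hw : Rich w) (hne : w ≠ []) (hu : u <:+ w)
    (hv : v <:+: w.dropLast) (h : maxPalSuffix u = maxPalSuffix v) :
    u.length < (maxPalSuffix w).length := by
  by_contra! hle
  have hsw : maxPalSuffix u = maxPalSuffix w :=
    maxPalSuffix_eq_of_suffix hu (suffix_of_suffix_length_le (maxPalSuffix_suffix w) hu hle)
  apply hw.not_maxPalSuffix_infix_dropLast hne
  rw [← hsw, h]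
  exact (maxPalSuffix_suffix v).isInfix.trans hv

theorem Rich.length_lt_maxPalPrefix (hw : Rich w) (hne : w ≠ []) (hv : v <+: w)
    (hu : u <:+: w.tail) (h : maxPalPrefix v = maxPalPrefix u) :
    v.length < (maxPalPrefix w).length := by
  simpa using hw.reverse.length_lt_maxPalSuffix (v := u.reverse) (by simpa)
    (reverse_suffix.mpr hv) (by simpa using hu) (by simpa using h)

theorem Rich.maxPalAffixes_ne_of_suffix_of_prefix (hw : Rich w)
    (ht : InjOn maxPalAffixes (nonpalFactors w.tail))
    (hu : u <:+ w) (huw : u ≠ w) (hv : v <+: w) (hvw : v ≠ w)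
    (hnu : u.reverse ≠ u) (hnv : v.reverse ≠ v) (huv : u ≠ v) :
    maxPalAffixes u ≠ maxPalAffixes v := by
  intro h
  obtain ⟨hp, hs⟩ : maxPalPrefix u = maxPalPrefix v ∧ maxPalSuffix u = maxPalSuffix v := by
    simpa [maxPalAffixes] using h
  have hne : w ≠ [] := by rintro rfl; exact huw (suffix_nil.mp hu)
  have hur : u.reverse <:+: w := by
    have hS := hw.length_lt_maxPalSuffix hne hu (hv.prefix_dropLast_of_ne hvw).isInfix hs
    have hu' : u <:+ maxPalSuffix w := suffix_of_suffix_length_le hu (maxPalSuffix_suffix w) hS.le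
    exact (reverse_maxPalSuffix w ▸ hu'.reverse).isInfix.trans (maxPalSuffix_suffix w).isInfix
  have hvr : v.reverse <:+: w.tail := by
    have hP := hw.length_lt_maxPalPrefix hne hv (hu.suffix_tail_of_ne huw).isInfix hp.symm
    have hv' : v <+: maxPalPrefix w := prefix_of_prefix_length_le hv (maxPalPrefix_prefix w) hP.le
    have hvr' : v.reverse <:+ maxPalPrefix w := reverse_maxPalPrefix w ▸ hv'.reverse
    have hvr'' : v.reverse ≠ maxPalPrefix w := fun h' => by simp [← h'] at hP
    exact (hvr'.suffix_tail_of_ne hvr'').isInfix.trans (maxPalPrefix_prefix w).tail.isInfix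
  -- `u.reverse` and `v.reverse` share the pair `(maxPalSuffix u, maxPalPrefix u)`, so they
  -- cannot both lie in `w.tail`
  have hurp : u.reverse <+: w := by
    refine (infix_iff_prefix_or_infix_tail.mp hur).resolve_right fun hurt => huv ?_
    refine reverse_injective (ht ⟨hurt, by simpa using hnu.symm⟩ ⟨hvr, by simpa using hnv.symm⟩ ?_)
    rw [maxPalAffixes_reverse, maxPalAffixes_reverse, h]
  have hsw : maxPalSuffix u <+: w := by simpa using (maxPalPrefix_prefix u.reverse).trans hurp
  have hpw : maxPalPrefix u <+: w := hp ▸ (maxPalPrefix_prefix v).trans hv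
  rcases prefix_or_prefix_of_prefix hpw hsw with hps | hsp
  · exact (hw.infix hu.isInfix).not_maxPalPrefix_infix_maxPalSuffix hnu hps.isInfix
  · exact (hw.infix hu.isInfix).not_maxPalSuffix_infix_maxPalPrefix hnu hsp.isInfix

theorem Rich.injOn_maxPalAffixes_of_dropLast_of_tail (hw : Rich w)
    (hd : InjOn maxPalAffixes (nonpalFactors w.dropLast))
    (ht : InjOn maxPalAffixes (nonpalFactors w.tail)) :
    InjOn maxPalAffixes (nonpalFactors w) := by
  rintro u ⟨hu, hnu⟩ v ⟨hv, hnv⟩ huv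
  by_contra hne
  wlog hud : ¬ u <:+: w.dropLast generalizing u v
  · by_cases hvd : v <:+: w.dropLast
    · exact hne (hd ⟨not_not.mp hud, hnu⟩ ⟨hvd, hnv⟩ huv)
    · exact this hv hnv hu hnu huv.symm (Ne.symm hne) hvd
  rcases eq_or_ne u w with rfl | huw
  · exact hw.maxPalAffixes_ne_of_infix_of_ne hv (Ne.symm hne) huv.symm
  have hus : u <:+ w := (infix_iff_suffix_or_infix_dropLast.mp hu).resolve_right hud
  have hvt : ¬ v <:+: w.tail := fun hvt =>
    hne (ht ⟨(hus.suffix_tail_of_ne huw).isInfix, hnu⟩ ⟨hvt, hnv⟩ huv)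
  rcases eq_or_ne v w with rfl | hvw
  · exact hw.maxPalAffixes_ne_of_infix_of_ne hu huw huv
  have hvp : v <+: w := (infix_iff_prefix_or_infix_tail.mp hv).resolve_right hvt
  exact hw.maxPalAffixes_ne_of_suffix_of_prefix ht hus huw hvp hvw hnu hnv hne huv

theorem Rich.injOn_maxPalAffixes {w : List A} (hw : Rich w) :
    InjOn maxPalAffixes (nonpalFactors w) := by
  rcases eq_or_ne w [] with rfl | hne
  · rintro u ⟨hu, hnu⟩
    simp [eq_nil_of_infix_nil hu] at hnu
  · exact hw.injOn_maxPalAffixes_of_dropLast_of_tail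
      (hw.prefix (dropLast_prefix w)).injOn_maxPalAffixes
      (hw.suffix (tail_suffix w)).injOn_maxPalAffixes
termination_by w.length
decreasing_by all_goals simp [length_pos_iff.mpr hne]

theorem rich_of_forall_not_maxPalSuffix_infix_maxPalPrefix
    (h : ∀ u, u <:+: w → u.reverse ≠ u → ¬ maxPalSuffix u <:+: maxPalPrefix u) : Rich w := by
  refine rich_iff_forall_not_maxPalSuffix_infix.mpr fun v a hva hm => ?_
  set m := maxPalSuffix (v ++ [a])
  obtain ⟨z₁, z₂, hz⟩ := hm
  set u := m ++ (z₂ ++ [a])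
  have hu : u <:+ v ++ [a] := ⟨z₁, by simp [u, ← hz]⟩
  have hsu : maxPalSuffix u = m := maxPalSuffix_eq_of_suffix hu
    (suffix_of_suffix_length_le (maxPalSuffix_suffix _) hu (by simp [u, m]))
  have hnu : u.reverse ≠ u := fun hpal => by
    have := (longestPalSuffix_maxPalSuffix (v ++ [a])).2.2 u hu hpal
    simp [u, m] at this
  refine h u (hu.isInfix.trans hva.isInfix) hnu ?_
  rw [hsu]
  exact (prefix_maxPalPrefix (prefix_append m _) (reverse_maxPalSuffix _)).isInfix

end Richness

end

/-- A finite word `w` is rich if and only if: for every non-palindromic factor `u`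
of `w`, the longest palindromic prefix `p` and the longest palindromic suffix `q`
of `u` satisfy `p ≠ q` and neither is a factor of the other, and any two
non-palindromic factors of `w` having the same longest palindromic prefix and the
same longest palindromic suffix are equal. -/
theorem rich_iff_unique_pal_prefix_suffix_determination {A : Type*} [DecidableEq A]
    (w : List A) :
    Rich w ↔
      ((∀ u p q : List A, u <:+: w → u.reverse ≠ u →
          LongestPalPrefix p u → LongestPalSuffix q u →
          p ≠ q ∧ ¬ p <:+: q ∧ ¬ q <:+: p) ∧
       (∀ u v p q : List A, u <:+: w → v <:+: w → u.reverse ≠ u → v.reverse ≠ v →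
          LongestPalPrefix p u → LongestPalPrefix p v →
          LongestPalSuffix q u → LongestPalSuffix q v → u = v)) := by
  constructor
  · intro hw
    refine ⟨fun u p q hu hnu hp hq => ?_, fun u v p q hu hv hnu hnv hpu hpv hqu hqv => ?_⟩
    · rw [hp.eq_maxPalPrefix, hq.eq_maxPalSuffix]
      have hpq := (hw.infix hu).not_maxPalPrefix_infix_maxPalSuffix hnu
      exact ⟨fun h => hpq (h ▸ List.infix_rfl), hpq,
        (hw.infix hu).not_maxPalSuffix_infix_maxPalPrefix hnu⟩
    · exact hw.injOn_maxPalAffixes ⟨hu, hnu⟩ ⟨hv, hnv⟩ <|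
        Prod.ext (hpu.eq_maxPalPrefix.symm.trans hpv.eq_maxPalPrefix)
          (hqu.eq_maxPalSuffix.symm.trans hqv.eq_maxPalSuffix)
  · rintro ⟨h, -⟩
    exact rich_of_forall_not_maxPalSuffix_infix_maxPalPrefix fun u hu hnu =>
      (h u _ _ hu hnu (longestPalPrefix_maxPalPrefix u) (longestPalSuffix_maxPalSuffix u)).2.2
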